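/- Fix k ≥ 1 and n = 3k + 1. Let G be the 𝒞-suspension of the path P_n over the maximal independent set 𝒞 = {x_1, x_4, ..., x_{3k+1}}. Then P_G(−1) = (−1)^{k+1}; in particular P_G(−1) ≠ 0. -/

import Mathlib

/-!
Splitting the independent sets of the suspension according to whether they contain the new
vertex gives `P_G(x) = P_{P_n}(x) + x · P_H(x)`, where `H` is the path with `𝒞` deleted.
Both terms are computed from the path recurrence `P_{n+2} = P_{n+1} + x · P_n` (deleting the last
vertex, or it together with its neighbour), with the term `x · P_n` dropped when the last vertex
is not allowed: at `x = -1` the path values are `1, 0, -1, -1, 0, 1, …`, so `P_{P_n}(-1) = 0`,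
while `H` consists of `k` disjoint edges, so `P_H(x) = (1 + 2x)^k`.
-/

open scoped Classical

/-- A finset of vertices is independent: no two of its members are adjacent. -/
def IsIndepFinset {V : Type*} (G : SimpleGraph V) (s : Finset V) : Prop :=
  ∀ a ∈ s, ∀ b ∈ s, ¬ G.Adj a b

/-- The independence polynomial of `G`, evaluated at `x : ℤ`:
`P_G(x) = Σ_i g_i x^i` where `g_i` is the number of independent sets of size `i`. -/
noncomputable def indepPolynomial {V : Type*} [Fintype V] (G : SimpleGraph V) (x : ℤ) : ℤ :=
  ∑ s ∈ Finset.univ.filter (fun s : Finset V => IsIndepFinset G s), x ^ s.card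

/-- The independence number of `G`. -/
noncomputable def indepNumber {V : Type*} [Fintype V] (G : SimpleGraph V) : ℕ :=
  (Finset.univ.filter (fun s : Finset V => IsIndepFinset G s)).sup Finset.card

/-- The `C`-suspension of `G`: adjoin a new vertex (`none`) adjacent exactly to `C`. -/
def susp {V : Type*} (G : SimpleGraph V) (C : Set V) : SimpleGraph (Option V) where
  Adj a b :=
    match a, b with
    | some a, some b => G.Adj a b
    | some a, none => a ∈ C
    | none, some b => b ∈ C
    | none, none => False
  symm := by
    constructor
    rintro (_ | a) (_ | b) h
    · exact h
    · exact h
    · exact h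
    · exact h.symm
  loopless := by
    constructor
    rintro (_ | a) h
    · exact h
    · exact G.irrefl h


open Finset SimpleGraph

theorem Finset.sum_powerset_map {α β M : Type*} [AddCommMonoid M] (f : α ↪ β) (s : Finset α)
    (g : Finset β → M) : ∑ u ∈ (s.map f).powerset, g u = ∑ t ∈ s.powerset, g (t.map f) := by
  have : (s.map f).powerset = s.powerset.map (mapEmbedding f).toEmbedding := by
    ext u
    simp [subset_map_iff, eq_comm]
  rw [this, sum_map]
  rfl

theorem Finset.sum_finset_option {α M : Type*} [Fintype α] [AddCommMonoid M]
    (g : Finset (Option α) → M) :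
    ∑ s, g s
      = ∑ t : Finset α, g (t.map Function.Embedding.some) + ∑ t : Finset α, g (insertNone t) := by
  rw [← powerset_univ, univ_option, insertNone, OrderEmbedding.coe_ofMapLEIff, cons_eq_insert,
    sum_powerset_insert (by simp), sum_powerset_map, sum_powerset_map, powerset_univ]
  simp only [cons_eq_insert]

section Suspension

variable {V : Type*} (G : SimpleGraph V) (C : Set V)

@[simp] theorem susp_adj_some_some (a b : V) : (susp G C).Adj (some a) (some b) ↔ G.Adj a b :=
  Iff.rfl

@[simp] theorem susp_adj_some_none (a : V) : (susp G C).Adj (some a) none ↔ a ∈ C := Iff.rfl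

@[simp] theorem susp_adj_none_some (b : V) : (susp G C).Adj none (some b) ↔ b ∈ C := Iff.rfl

@[simp] theorem susp_adj_none_none : ¬ (susp G C).Adj none none := id

theorem isIndepFinset_susp_map_some (s : Finset V) :
    IsIndepFinset (susp G C) (s.map Function.Embedding.some) ↔ IsIndepFinset G s := by
  simp [IsIndepFinset]

theorem isIndepFinset_susp_insertNone (s : Finset V) :
    IsIndepFinset (susp G C) (insertNone s) ↔ IsIndepFinset G s ∧ ∀ v ∈ s, v ∉ C := by
  simp only [IsIndepFinset, forall_mem_insertNone, susp_adj_none_none, susp_adj_none_some,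
    susp_adj_some_none, susp_adj_some_some, not_false_eq_true, true_and, forall_and]
  tauto

end Suspension

/-- `P_{G[p]}(x)`, the independence polynomial of the subgraph of `G` induced on `{v | p v}`. -/
noncomputable def restrictedIndepPolynomial {V : Type*} [Fintype V] (G : SimpleGraph V)
    (p : V → Prop) (x : ℤ) : ℤ :=
  ∑ s : Finset V, if IsIndepFinset G s ∧ ∀ v ∈ s, p v then x ^ s.card else 0

theorem indepPolynomial_susp {V : Type*} [Fintype V] (G : SimpleGraph V) (C : Set V) (x : ℤ) :
    indepPolynomial (susp G C) x
      = indepPolynomial G x + x * restrictedIndepPolynomial G (· ∉ C) x := by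
  rw [indepPolynomial, sum_filter, sum_finset_option, indepPolynomial, sum_filter,
    restrictedIndepPolynomial, mul_sum]
  congr 1 <;> refine sum_congr rfl fun t _ => ?_
  · simp only [isIndepFinset_susp_map_some, card_map]
  · simp only [isIndepFinset_susp_insertNone, card_insertNone, pow_succ', mul_ite, mul_zero]

def NoTwoConsecutive (s : Finset ℕ) : Prop := ∀ i ∈ s, i + 1 ∉ s

/-- `restrictedIndepPolynomial` of the path `0 — 1 — ⋯ — (n - 1)` on `ℕ`. -/
noncomputable def pathIndepSum (p : ℕ → Prop) (x : ℤ) (n : ℕ) : ℤ :=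
  ∑ s ∈ (range n).powerset, if NoTwoConsecutive s ∧ ∀ i ∈ s, p i then x ^ s.card else 0

theorem isIndepFinset_pathGraph_iff {n : ℕ} (t : Finset (Fin n)) :
    IsIndepFinset (pathGraph n) t ↔ NoTwoConsecutive (t.map Fin.valEmbedding) := by
  simp only [IsIndepFinset, NoTwoConsecutive, pathGraph_adj, Fin.valEmbedding_apply, mem_map,
    not_exists, not_and, not_or]
  constructor
  · rintro h _ ⟨a, ha, rfl⟩ b hb hab
    exact (h a ha b hb).1 hab.symm
  · intro h a ha b hb
    exact ⟨fun hab => h _ ⟨a, ha, rfl⟩ b hb hab.symm, fun hba => h _ ⟨b, hb, rfl⟩ a ha hba.symm⟩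

theorem restrictedIndepPolynomial_pathGraph (p : ℕ → Prop) (x : ℤ) (n : ℕ) :
    restrictedIndepPolynomial (pathGraph n) (fun v => p v) x = pathIndepSum p x n := by
  rw [pathIndepSum, ← Nat.Iio_eq_range, ← Fin.map_valEmbedding_univ, sum_powerset_map,
    powerset_univ, restrictedIndepPolynomial]
  refine sum_congr rfl fun t _ => ?_
  simp [isIndepFinset_pathGraph_iff]

section PathRecurrence

variable (p : ℕ → Prop) (x : ℤ)

theorem pathIndepSum_zero : pathIndepSum p x 0 = 1 := by
  simp [pathIndepSum, NoTwoConsecutive]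

theorem pathIndepSum_one : pathIndepSum p x 1 = 1 + if p 0 then x else 0 := by
  rw [pathIndepSum, range_add_one, sum_powerset_insert notMem_range_self]
  simp [NoTwoConsecutive]

theorem noTwoConsecutive_insert {s : Finset ℕ} {m : ℕ} (hs : ∀ i ∈ s, i + 1 < m) :
    NoTwoConsecutive (insert m s) ↔ NoTwoConsecutive s := by
  rw [NoTwoConsecutive, NoTwoConsecutive, forall_mem_insert]
  simp only [mem_insert, not_or]
  constructor
  · exact fun h i hi hi' => (h.2 i hi).2 hi'
  · intro h
    refine ⟨⟨by omega, fun hm => by have := hs _ hm; omega⟩, fun i hi => ⟨?_, h i hi⟩⟩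
    have := hs i hi
    omega

theorem pathIndepSum_add_two (n : ℕ) :
    pathIndepSum p x (n + 2)
      = pathIndepSum p x (n + 1) + if p (n + 1) then x * pathIndepSum p x n else 0 := by
  rw [pathIndepSum, range_add_one, sum_powerset_insert notMem_range_self, ← pathIndepSum,
    range_add_one, sum_powerset_insert notMem_range_self]
  have hadjacent (t : Finset ℕ) : ¬ NoTwoConsecutive (insert (n + 1) (insert n t)) :=
    fun h => h n (by simp) (by simp)
  have htop : ∀ t ∈ (range n).powerset,
      (if NoTwoConsecutive (insert (n + 1) t) ∧ ∀ i ∈ insert (n + 1) t, p i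
        then x ^ #(insert (n + 1) t) else 0)
      = if p (n + 1) then x * if NoTwoConsecutive t ∧ ∀ i ∈ t, p i then x ^ #t else 0 else 0 := by
    intro t ht
    have hlt : ∀ i ∈ t, i + 1 < n + 1 := fun i hi => by
      simpa using mem_range.1 (mem_powerset.1 ht hi)
    have hn : n + 1 ∉ t := fun h => by simpa using hlt _ h
    simp only [noTwoConsecutive_insert hlt, forall_mem_insert, card_insert_of_notMem hn, pow_succ']
    split_ifs <;> simp_all
  simp only [hadjacent, false_and, if_false, sum_const_zero, add_zero, sum_congr rfl htop]
  split_ifs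
  · simp only [pathIndepSum, mul_sum]
  · simp

end PathRecurrence

theorem pathIndepSum_true_neg_one_add_three (n : ℕ) :
    pathIndepSum (fun _ => True) (-1) (n + 3) = -pathIndepSum (fun _ => True) (-1) n := by
  have h₁ := pathIndepSum_add_two (fun _ => True) (-1) (n + 1)
  have h₂ := pathIndepSum_add_two (fun _ => True) (-1) n
  simp only [if_true] at h₁ h₂
  linarith

theorem pathIndepSum_true_neg_one_three_mul_add_one (k : ℕ) :
    pathIndepSum (fun _ => True) (-1) (3 * k + 1) = 0 := by
  induction k with
  | zero => simp [pathIndepSum_one]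
  | succ k ih => rw [show 3 * (k + 1) + 1 = 3 * k + 1 + 3 by ring,
      pathIndepSum_true_neg_one_add_three, ih, neg_zero]

theorem pathIndepSum_mod_three_ne_zero (x : ℤ) (m : ℕ) :
    pathIndepSum (· % 3 ≠ 0) x (3 * m + 1) = (1 + 2 * x) ^ m ∧
      pathIndepSum (· % 3 ≠ 0) x (3 * m + 2) = (1 + 2 * x) ^ m * (1 + x) := by
  set B := pathIndepSum (· % 3 ≠ 0) x
  have step (n : ℕ) (h : (n + 1) % 3 ≠ 0) : B (n + 2) = B (n + 1) + x * B n := by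
    simp only [B, pathIndepSum_add_two, if_pos h]
  have skip (n : ℕ) (h : (n + 1) % 3 = 0) : B (n + 2) = B (n + 1) := by
    simp only [B, pathIndepSum_add_two, h, ne_eq, not_true_eq_false, if_false, add_zero]
  induction m with
  | zero =>
    have h₀ : B 0 = 1 := pathIndepSum_zero _ _
    have h₁ : B 1 = 1 := by simp [B, pathIndepSum_one]
    have h₂ : B 2 = 1 + x := by rw [step 0 (by norm_num), h₁, h₀, mul_one]
    simp [h₁, h₂]
  | succ m ih =>
    obtain ⟨h₁, h₂⟩ := ih
    have h₃ : B (3 * m + 3) = (1 + 2 * x) ^ (m + 1) := by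
      rw [step (3 * m + 1) (by omega), h₂, h₁]; ring
    have h₄ : B (3 * m + 4) = (1 + 2 * x) ^ (m + 1) := by
      rw [skip (3 * m + 2) (by omega), h₃]
    have h₅ : B (3 * m + 5) = (1 + 2 * x) ^ (m + 1) * (1 + x) := by
      rw [step (3 * m + 3) (by omega), h₄, h₃]; ring
    exact ⟨h₄, h₅⟩

theorem restrictedIndepPolynomial_true {V : Type*} [Fintype V] (G : SimpleGraph V) (x : ℤ) :
    restrictedIndepPolynomial G (fun _ => True) x = indepPolynomial G x := by
  simp [restrictedIndepPolynomial, indepPolynomial, sum_filter]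

theorem indepPolynomial_pathGraph_neg_one_three_mul_add_one (k : ℕ) :
    indepPolynomial (pathGraph (3 * k + 1)) (-1) = 0 := by
  rw [← restrictedIndepPolynomial_true]
  exact (restrictedIndepPolynomial_pathGraph (fun _ => True) (-1) _).trans
    (pathIndepSum_true_neg_one_three_mul_add_one k)

theorem indepPolynomial_susp_pathGraph (k : ℕ) (x : ℤ) :
    indepPolynomial
        (susp (pathGraph (3 * k + 1)) {v : Fin (3 * k + 1) | (v : ℕ) % 3 = 0}) x
      = indepPolynomial (pathGraph (3 * k + 1)) x + x * (1 + 2 * x) ^ k := by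
  rw [indepPolynomial_susp]
  congr 2
  exact (restrictedIndepPolynomial_pathGraph (· % 3 ≠ 0) x _).trans
    (pathIndepSum_mod_three_ne_zero x k).1

theorem stmt17_general (k : ℕ) :
    indepPolynomial
        (susp (SimpleGraph.pathGraph (3 * k + 1))
          {v : Fin (3 * k + 1) | (v : ℕ) % 3 = 0}) (-1) = (-1) ^ (k + 1) ∧
      indepPolynomial
        (susp (SimpleGraph.pathGraph (3 * k + 1))
          {v : Fin (3 * k + 1) | (v : ℕ) % 3 = 0}) (-1) ≠ 0 := by
  have hvalue : indepPolynomial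
      (susp (pathGraph (3 * k + 1)) {v : Fin (3 * k + 1) | (v : ℕ) % 3 = 0}) (-1)
        = (-1) ^ (k + 1) := by
    rw [indepPolynomial_susp_pathGraph, indepPolynomial_pathGraph_neg_one_three_mul_add_one]
    ring
  exact ⟨hvalue, hvalue ▸ pow_ne_zero _ (by norm_num)⟩

/-- For `n = 3k + 1` and the `𝒞`-suspension `G` of the path `P_n` over the
maximal independent set `𝒞 = {x_1, x_4, …, x_{3k+1}}` (the vertices of index
`≡ 0 (mod 3)` in `Fin n`): `P_G(-1) = (-1)^{k+1} ≠ 0`. -/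
theorem stmt17 (k : ℕ) (hk : 1 ≤ k) :
    indepPolynomial
        (susp (SimpleGraph.pathGraph (3 * k + 1))
          {v : Fin (3 * k + 1) | (v : ℕ) % 3 = 0}) (-1) = (-1) ^ (k + 1) ∧
      indepPolynomial
        (susp (SimpleGraph.pathGraph (3 * k + 1))
          {v : Fin (3 * k + 1) | (v : ℕ) % 3 = 0}) (-1) ≠ 0 :=
  stmt17_general k
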